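/- arXiv:2106.02981 — 6 statements merged into one kernel-verified Lean document; each statement's English description precedes it below -/
import Mathlib

section
/- Let G be a simple graph and let C ⊆ V(G) with |C| < w/2 for an integer w. If C contains two distinct vertices u, v each of degree at least w in G, then the number of edges of G between C and V(G) \ C is strictly greater than the number of edges between C \ {u} and its complement. Consequently, if C is a minimum (v,p)-cut of value at least w for some p ∉ C, then C cannot contain two vertices of degree ≥ w when |C| < w/2. -/
open Finset

/-- Number of edges of the simple graph `G` between `S` and its complement. -/
def cutVal {V : Type*} [Fintype V] [DecidableEq V] (G : SimpleGraph V) [DecidableRel G.Adj]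
    (S : Finset V) : ℕ :=
  ∑ x ∈ S, ∑ y ∈ Sᶜ, if G.Adj x y then 1 else 0

/-- If `C` has fewer than `w/2` vertices and contains two distinct vertices `u, v` of degree
at least `w`, then removing `u` from `C` strictly decreases the number of edges leaving the set.
Consequently, such a `C` cannot be a minimum `(v,p)`-cut of value at least `w`. -/
theorem stmt_1 {V : Type*} [Fintype V] [DecidableEq V]
    (G : SimpleGraph V) [DecidableRel G.Adj]
    (C : Finset V) (w : ℕ) (u v : V) (huv : u ≠ v) (hu : u ∈ C) (hv : v ∈ C)
    (hdu : w ≤ G.degree u) (hdv : w ≤ G.degree v) (hC : 2 * C.card < w) :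
    cutVal G (C.erase u) < cutVal G C ∧
      ∀ p : V, p ∉ C → w ≤ cutVal G C →
        (∀ S : Finset V, v ∈ S → p ∉ S → cutVal G C ≤ cutVal G S) → False := by
  set f : V → Finset V → ℕ := fun x S => ∑ y ∈ S, if G.Adj x y then 1 else 0 with hf
  have hdeg : f u C + f u Cᶜ = G.degree u := by
    rw [hf]
    simp only
    rw [Finset.sum_add_sum_compl, ← Finset.card_filter, ← SimpleGraph.neighborFinset_eq_filter]
    rfl
  have h1 : cutVal G C = (∑ x ∈ C.erase u, f x Cᶜ) + f u Cᶜ := by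
    rw [cutVal, ← Finset.sum_erase_add _ _ hu]
  have h2 : (C.erase u)ᶜ = insert u Cᶜ := by
    ext x
    simp only [Finset.mem_compl, Finset.mem_erase, Finset.mem_insert, not_and_or, not_not]
  have hu' : u ∉ Cᶜ := by simp [hu]
  have h3 : cutVal G (C.erase u) =
      (∑ x ∈ C.erase u, f x Cᶜ) + ∑ x ∈ C.erase u, (if G.Adj x u then 1 else 0) := by
    rw [cutVal, h2]
    simp_rw [Finset.sum_insert hu']
    rw [Finset.sum_add_distrib, add_comm]
  have hsym : ∑ x ∈ C.erase u, (if G.Adj x u then 1 else 0) = f u (C.erase u) := by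
    refine Finset.sum_congr rfl fun x _ => ?_
    exact if_congr (G.adj_comm x u) rfl rfl
  have hfc : f u (C.erase u) = f u C := by
    rw [hf]
    exact Finset.sum_erase _ (by simp)
  have hle : f u C ≤ C.card := by
    rw [hf]
    simp only
    rw [← Finset.card_filter]
    exact Finset.card_filter_le _ _
  have key : cutVal G (C.erase u) < cutVal G C := by
    rw [h1, h3, hsym, hfc]
    omega
  refine ⟨key, fun p hp hw hmin => ?_⟩
  exact absurd (hmin (C.erase u) (Finset.mem_erase.mpr ⟨huv.symm, hv⟩)
    (fun h => hp (Finset.mem_of_mem_erase h))) (not_le.mpr key)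
end

section
/- Let G be a simple graph on n vertices, p a vertex, w a positive integer, and let C₁, …, C_x ⊆ V(G) \ {p} be pairwise disjoint sets such that each Cᵢ is a minimum (vᵢ,p)-cut (for some vᵢ ∈ Cᵢ) of value at least w and each Cᵢ contains at least two vertices of degree at least w. Then x ≤ 2n/w. -/
open Finset

lemma cutkey {V : Type*} [Fintype V] [DecidableEq V] (G : SimpleGraph V) [DecidableRel G.Adj]
    (p : V) (w : ℕ) (Ci : Finset V) (hp : p ∉ Ci) (v : V) (hv : v ∈ Ci)
    (hmin : ∀ S : Finset V, v ∈ S → p ∉ S → cutVal G Ci ≤ cutVal G S)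
    (a : V) (ha : a ∈ Ci) (hav : a ≠ v) (hda : w ≤ G.degree a) :
    w ≤ 2 * Ci.card := by
  set f : V → ℕ := fun x => ∑ y ∈ Ciᶜ, if G.Adj x y then 1 else 0 with hf
  have hanc : a ∉ Ciᶜ := by simp [ha]
  have hcompl : (Ci.erase a)ᶜ = insert a Ciᶜ := by
    ext y; simp [Finset.mem_erase]
  have hcut1 : cutVal G Ci = f a + ∑ x ∈ Ci.erase a, f x := by
    rw [cutVal, ← Finset.add_sum_erase _ _ ha]
  have hcut2 : cutVal G (Ci.erase a) =
      (∑ x ∈ Ci.erase a, if G.Adj x a then 1 else 0) + ∑ x ∈ Ci.erase a, f x := by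
    rw [cutVal, ← Finset.sum_add_distrib]
    refine Finset.sum_congr rfl fun x _ => ?_
    rw [hcompl, Finset.sum_insert hanc]
  have hle : cutVal G Ci ≤ cutVal G (Ci.erase a) :=
    hmin _ (Finset.mem_erase.2 ⟨fun h => hav h.symm, hv⟩)
      (fun h => hp (Finset.erase_subset _ _ h))
  have hfa : f a ≤ (Ci.erase a).card := by
    have h1 : (∑ x ∈ Ci.erase a, if G.Adj x a then 1 else 0) ≤
        ∑ _x ∈ Ci.erase a, 1 :=
      Finset.sum_le_sum (fun x _ => by split_ifs <;> omega)
    simp only [Finset.sum_const, smul_eq_mul, mul_one] at h1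
    omega
  -- degree bound
  have hdegeq : G.degree a = (∑ y ∈ Ci.erase a, if G.Adj a y then 1 else 0) + f a := by
    have h0 : G.degree a = ∑ y : V, if G.Adj a y then 1 else 0 := by
      rw [SimpleGraph.degree]
      have : G.neighborFinset a = Finset.univ.filter (G.Adj a) := by
        ext y; simp
      rw [this, Finset.card_filter]
    rw [h0, ← Finset.sum_add_sum_compl Ci]
    congr 1
    rw [← Finset.add_sum_erase _ _ ha]
    simp
  have hC : (∑ y ∈ Ci.erase a, if G.Adj a y then 1 else 0) ≤ (Ci.erase a).card := by
    have h1 : (∑ y ∈ Ci.erase a, if G.Adj a y then 1 else 0) ≤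
        ∑ _y ∈ Ci.erase a, 1 :=
      Finset.sum_le_sum (fun y _ => by split_ifs <;> omega)
    simpa using h1
  have hcardle : (Ci.erase a).card ≤ Ci.card := Finset.card_le_card (Finset.erase_subset _ _)
  omega

/-- If `C₁, …, C_x` are pairwise disjoint minimum `(vᵢ,p)`-cuts of value at least `w`, each
containing at least two vertices of degree at least `w`, then `x ≤ 2n/w`. -/
theorem stmt_2 {V : Type*} [Fintype V] [DecidableEq V]
    (G : SimpleGraph V) [DecidableRel G.Adj]
    (p : V) (w x : ℕ) (hw : 0 < w) (C : Fin x → Finset V)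
    (hdisj : ∀ i j, i ≠ j → Disjoint (C i) (C j))
    (hp : ∀ i, p ∉ C i)
    (hmin : ∀ i, ∃ v ∈ C i,
      (∀ S : Finset V, v ∈ S → p ∉ S → cutVal G (C i) ≤ cutVal G S) ∧ w ≤ cutVal G (C i))
    (hdeg : ∀ i, ∃ a ∈ C i, ∃ b ∈ C i, a ≠ b ∧ w ≤ G.degree a ∧ w ≤ G.degree b) :
    x * w ≤ 2 * Fintype.card V := by
  have hkey : ∀ i, w ≤ 2 * (C i).card := by
    intro i
    obtain ⟨v, hv, hm, _⟩ := hmin i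
    obtain ⟨a, ha, b, hb, hab, hda, hdb⟩ := hdeg i
    by_cases h : a = v
    · exact cutkey G p w (C i) (hp i) v hv hm b hb (fun hbv => hab (h ▸ hbv).symm) hdb
    · exact cutkey G p w (C i) (hp i) v hv hm a ha h hda
  calc x * w = ∑ _i : Fin x, w := by simp [mul_comm]
    _ ≤ ∑ i, 2 * (C i).card := Finset.sum_le_sum (fun i _ => hkey i)
    _ = 2 * ∑ i, (C i).card := by rw [Finset.mul_sum]
    _ = 2 * (Finset.univ.biUnion C).card := by
        rw [Finset.card_biUnion (fun i _ j _ h => hdisj i j h)]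
    _ ≤ 2 * Fintype.card V := by
        have := Finset.card_le_univ (Finset.univ.biUnion C)
        omega
end

section
/- Fix a vertex p in an undirected capacitated graph G. For each vertex v ≠ p, let S_v be the latest minimum (p,v)-cut with respect to p, i.e., the minimum (p,v)-cut whose v-side is inclusion-minimal among all minimum (p,v)-cuts. Then the family {S_v : v ≠ p} of v-sides is laminar: for any u, v, the sets S_u and S_v are either disjoint or one contains the other. -/
open Finset

/-- Total capacity of edges leaving `S` in a capacitated graph with capacities `c`. -/
def cutValR {V : Type*} [Fintype V] [DecidableEq V] (c : V → V → ℝ) (S : Finset V) : ℝ :=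
  ∑ x ∈ S, ∑ y ∈ Sᶜ, c x y

lemma cutValR_eq_sum_ite {V : Type*} [Fintype V] [DecidableEq V] (c : V → V → ℝ)
    (S : Finset V) :
    cutValR c S = ∑ x, ∑ y, if x ∈ S ∧ y ∉ S then c x y else 0 := by
  unfold cutValR
  rw [← Finset.sum_filter_add_sum_filter_not Finset.univ (· ∈ S)]
  have h0 : ∑ x ∈ Finset.univ.filter (fun x => ¬ x ∈ S),
      ∑ y, (if x ∈ S ∧ y ∉ S then c x y else 0) = 0 := by
    apply Finset.sum_eq_zero
    intro x hx
    rw [Finset.mem_filter] at hx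
    apply Finset.sum_eq_zero
    intro y _
    simp [hx.2]
  rw [h0, add_zero]
  have hfil : Finset.univ.filter (· ∈ S) = S := by
    ext x; simp
  rw [hfil]
  apply Finset.sum_congr rfl
  intro x hx
  rw [← Finset.sum_filter_add_sum_filter_not Finset.univ (· ∉ S)]
  have h1 : ∑ y ∈ Finset.univ.filter (fun y => ¬ y ∉ S),
      (if x ∈ S ∧ y ∉ S then c x y else 0) = 0 := by
    apply Finset.sum_eq_zero
    intro y hy
    rw [Finset.mem_filter] at hy
    simp [hy.2]
  rw [h1, add_zero]
  have hfil2 : Finset.univ.filter (· ∉ S) = Sᶜ := by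
    ext y; simp
  rw [hfil2]
  apply Finset.sum_congr rfl
  intro y hy
  rw [Finset.mem_compl] at hy
  simp [hx, hy]

lemma cutValR_nonneg_submodular {V : Type*} [Fintype V] [DecidableEq V] (c : V → V → ℝ)
    (hpos : ∀ a b, a ≠ b → 0 < c a b) (A B : Finset V) :
    cutValR c (A ∩ B) + cutValR c (A ∪ B) ≤ cutValR c A + cutValR c B := by
  simp only [cutValR_eq_sum_ite]
  rw [← Finset.sum_add_distrib, ← Finset.sum_add_distrib]
  apply Finset.sum_le_sum
  intro x _
  rw [← Finset.sum_add_distrib, ← Finset.sum_add_distrib]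
  apply Finset.sum_le_sum
  intro y _
  by_cases hxy : x = y
  · subst hxy
    have h1 : ¬ (x ∈ A ∩ B ∧ x ∉ A ∩ B) := fun h => h.2 h.1
    have h2 : ¬ (x ∈ A ∪ B ∧ x ∉ A ∪ B) := fun h => h.2 h.1
    have h3 : ¬ (x ∈ A ∧ x ∉ A) := fun h => h.2 h.1
    have h4 : ¬ (x ∈ B ∧ x ∉ B) := fun h => h.2 h.1
    rw [if_neg h1, if_neg h2, if_neg h3, if_neg h4]
  · have hc : 0 ≤ c x y := (hpos x y hxy).le
    by_cases hxA : x ∈ A <;> by_cases hxB : x ∈ B <;>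
      by_cases hyA : y ∈ A <;> by_cases hyB : y ∈ B <;>
      simp [Finset.mem_inter, Finset.mem_union, hxA, hxB, hyA, hyB] <;> linarith

lemma cutValR_compl {V : Type*} [Fintype V] [DecidableEq V] (c : V → V → ℝ)
    (hsymm : ∀ a b, c a b = c b a) (S : Finset V) :
    cutValR c Sᶜ = cutValR c S := by
  unfold cutValR
  rw [compl_compl, Finset.sum_comm]
  exact Finset.sum_congr rfl fun x _ => Finset.sum_congr rfl fun y _ => hsymm y x

lemma cutValR_posimodular {V : Type*} [Fintype V] [DecidableEq V] (c : V → V → ℝ)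
    (hsymm : ∀ a b, c a b = c b a) (hpos : ∀ a b, a ≠ b → 0 < c a b) (A B : Finset V) :
    cutValR c (A \ B) + cutValR c (B \ A) ≤ cutValR c A + cutValR c B := by
  have h := cutValR_nonneg_submodular c hpos A Bᶜ
  have h1 : A ∩ Bᶜ = A \ B := by
    ext x; simp [Finset.mem_sdiff]
  have h2 : cutValR c (A ∪ Bᶜ) = cutValR c (B \ A) := by
    rw [← cutValR_compl c hsymm (A ∪ Bᶜ)]
    congr 1
    ext x; simp [Finset.mem_sdiff, and_comm]
  rw [h1, h2, cutValR_compl c hsymm B] at h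
  exact h

/-- The family of `v`-sides of latest minimum `(p,v)`-cuts (with respect to `p`) is laminar:
any two are disjoint or nested. -/
theorem stmt_5 {V : Type*} [Fintype V] [DecidableEq V]
    (c : V → V → ℝ) (hsymm : ∀ a b, c a b = c b a) (hpos : ∀ a b, a ≠ b → 0 < c a b)
    (p : V) (S : V → Finset V)
    (hmem : ∀ v, v ≠ p → v ∈ S v)
    (hp : ∀ v, v ≠ p → p ∉ S v)
    (hmin : ∀ v, v ≠ p → ∀ T : Finset V, v ∈ T → p ∉ T → cutValR c (S v) ≤ cutValR c T)
    (hlatest : ∀ v, v ≠ p → ∀ T : Finset V, v ∈ T → p ∉ T →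
      cutValR c T = cutValR c (S v) → S v ⊆ T) :
    ∀ u v : V, u ≠ p → v ≠ p →
      Disjoint (S u) (S v) ∨ S u ⊆ S v ∨ S v ⊆ S u := by
  intro u v hu hv
  by_cases huv : u ∈ S v
  · -- S u ⊆ S v
    right; left
    have hpi : p ∉ S u ∩ S v := by
      simp [Finset.mem_inter, hp u hu]
    have hpu : p ∉ S u ∪ S v := by
      simp [Finset.mem_union, hp u hu, hp v hv]
    have h1 := hmin u hu (S u ∩ S v) (Finset.mem_inter.2 ⟨hmem u hu, huv⟩) hpi
    have h2 := hmin v hv (S u ∪ S v) (Finset.mem_union_right _ (hmem v hv)) hpu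
    have hsub := cutValR_nonneg_submodular c hpos (S u) (S v)
    have heq : cutValR c (S u ∩ S v) = cutValR c (S u) := by linarith
    have := hlatest u hu (S u ∩ S v) (Finset.mem_inter.2 ⟨hmem u hu, huv⟩) hpi heq
    exact fun x hx => (Finset.mem_inter.1 (this hx)).2
  · by_cases hvu : v ∈ S u
    · right; right
      have hpi : p ∉ S u ∩ S v := by
        simp [Finset.mem_inter, hp u hu]
      have hpu : p ∉ S u ∪ S v := by
        simp [Finset.mem_union, hp u hu, hp v hv]
      have h1 := hmin v hv (S u ∩ S v) (Finset.mem_inter.2 ⟨hvu, hmem v hv⟩) hpi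
      have h2 := hmin u hu (S u ∪ S v) (Finset.mem_union_left _ (hmem u hu)) hpu
      have hsub := cutValR_nonneg_submodular c hpos (S u) (S v)
      have heq : cutValR c (S u ∩ S v) = cutValR c (S v) := by linarith
      have := hlatest v hv (S u ∩ S v) (Finset.mem_inter.2 ⟨hvu, hmem v hv⟩) hpi heq
      exact fun x hx => (Finset.mem_inter.1 (this hx)).1
    · left
      have hpd1 : p ∉ S u \ S v := fun h => hp u hu (Finset.mem_sdiff.1 h).1
      have hpd2 : p ∉ S v \ S u := fun h => hp v hv (Finset.mem_sdiff.1 h).1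
      have hud : u ∈ S u \ S v := Finset.mem_sdiff.2 ⟨hmem u hu, huv⟩
      have hvd : v ∈ S v \ S u := Finset.mem_sdiff.2 ⟨hmem v hv, hvu⟩
      have h1 := hmin u hu (S u \ S v) hud hpd1
      have h2 := hmin v hv (S v \ S u) hvd hpd2
      have hposi := cutValR_posimodular c hsymm hpos (S u) (S v)
      have heq : cutValR c (S u \ S v) = cutValR c (S u) := by linarith
      have hsub := hlatest u hu (S u \ S v) hud hpd1 heq
      rw [Finset.disjoint_left]
      intro a ha hav
      exact (Finset.mem_sdiff.1 (hsub ha)).2 hav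
end

section
/- Let G be a graph with all minimum cuts unique (e.g., after generic perturbation of edge weights). Then for a fixed vertex p, the collection of (v-sides of) minimum (p,v)-cuts over all v ≠ p forms a laminar family, i.e., any two such sets are disjoint or nested. -/
open Finset

lemma cut_expand {V : Type*} [Fintype V] [DecidableEq V] (c : V → V → ℝ) (S : Finset V) :
    cutValR c S = ∑ x, ∑ y, (if x ∈ S ∧ y ∉ S then c x y else 0) := by
  unfold cutValR
  rw [← Finset.sum_filter_add_sum_filter_not Finset.univ (· ∈ S)]
  have h1 : ∑ x ∈ Finset.univ.filter (· ∉ S), ∑ y, (if x ∈ S ∧ y ∉ S then c x y else 0) = 0 := by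
    apply Finset.sum_eq_zero
    intro x hx
    simp only [Finset.mem_filter] at hx
    apply Finset.sum_eq_zero
    intro y _
    simp [hx.2]
  rw [h1, add_zero]
  have h2 : Finset.univ.filter (· ∈ S) = S := by
    ext x; simp
  rw [h2]
  refine Finset.sum_congr rfl fun x hx => ?_
  rw [← Finset.sum_filter_add_sum_filter_not Finset.univ (· ∉ S)]
  have h3 : ∑ y ∈ Finset.univ.filter (fun y => ¬ y ∉ S), (if x ∈ S ∧ y ∉ S then c x y else 0) = 0 := by
    apply Finset.sum_eq_zero
    intro y hy
    simp only [Finset.mem_filter] at hy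
    simp [hy.2]
  rw [h3, add_zero]
  have h4 : Finset.univ.filter (fun y => y ∉ S) = Sᶜ := by
    ext y; simp
  rw [h4]
  refine Finset.sum_congr rfl fun y hy => ?_
  simp only [Finset.mem_compl] at hy
  simp [hx, hy]

lemma cut_swap {V : Type*} [Fintype V] [DecidableEq V] (c : V → V → ℝ)
    (hsymm : ∀ a b, c a b = c b a) (S : Finset V) :
    cutValR c S = ∑ x, ∑ y, (if y ∈ S ∧ x ∉ S then c x y else 0) := by
  rw [cut_expand]
  rw [Finset.sum_comm]
  refine Finset.sum_congr rfl fun x _ => Finset.sum_congr rfl fun y _ => ?_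
  rw [hsymm]

lemma submod {V : Type*} [Fintype V] [DecidableEq V] (c : V → V → ℝ)
    (hnn : ∀ a b, a ≠ b → 0 ≤ c a b) (A B : Finset V) :
    cutValR c (A ∪ B) + cutValR c (A ∩ B) ≤ cutValR c A + cutValR c B := by
  simp only [cut_expand]
  rw [← Finset.sum_add_distrib, ← Finset.sum_add_distrib]
  refine Finset.sum_le_sum fun x _ => ?_
  rw [← Finset.sum_add_distrib, ← Finset.sum_add_distrib]
  refine Finset.sum_le_sum fun y _ => ?_
  rcases eq_or_ne x y with rfl | hxy
  · by_cases h1 : x ∈ A <;> by_cases h2 : x ∈ B <;> simp [h1, h2]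
  · have hr := hnn x y hxy
    by_cases h1 : x ∈ A <;> by_cases h2 : x ∈ B <;> by_cases h3 : y ∈ A <;> by_cases h4 : y ∈ B <;>
      simp [Finset.mem_union, Finset.mem_inter, h1, h2, h3, h4] <;> linarith

lemma posimod {V : Type*} [Fintype V] [DecidableEq V] (c : V → V → ℝ)
    (hsymm : ∀ a b, c a b = c b a) (hnn : ∀ a b, a ≠ b → 0 ≤ c a b) (A B : Finset V) :
    cutValR c (A \ B) + cutValR c (B \ A) ≤ cutValR c A + cutValR c B := by
  have double : ∀ S : Finset V, 2 * cutValR c S =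
      ∑ x, ∑ y, ((if x ∈ S ∧ y ∉ S then c x y else 0) + (if y ∈ S ∧ x ∉ S then c x y else 0)) := by
    intro S
    rw [two_mul]
    nth_rewrite 1 [cut_expand]
    nth_rewrite 1 [cut_swap c hsymm]
    rw [← Finset.sum_add_distrib]
    refine Finset.sum_congr rfl fun x _ => ?_
    rw [← Finset.sum_add_distrib]
  have key : 2 * cutValR c (A \ B) + 2 * cutValR c (B \ A) ≤ 2 * cutValR c A + 2 * cutValR c B := by
    simp only [double]
    rw [← Finset.sum_add_distrib, ← Finset.sum_add_distrib]
    refine Finset.sum_le_sum fun x _ => ?_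
    rw [← Finset.sum_add_distrib, ← Finset.sum_add_distrib]
    refine Finset.sum_le_sum fun y _ => ?_
    rcases eq_or_ne x y with rfl | hxy
    · by_cases h1 : x ∈ A <;> by_cases h2 : x ∈ B <;> simp [h1, h2]
    · have hr := hnn x y hxy
      by_cases h1 : x ∈ A <;> by_cases h2 : x ∈ B <;> by_cases h3 : y ∈ A <;> by_cases h4 : y ∈ B <;>
        simp [Finset.mem_sdiff, h1, h2, h3, h4] <;> linarith
  linarith

/-- In a weighted graph where all minimum cuts are unique, the `v`-sides of the minimum
`(p,v)`-cuts over all `v ≠ p` form a laminar family: any two are disjoint or nested. -/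
theorem stmt_16 {V : Type*} [Fintype V] [DecidableEq V]
    (c : V → V → ℝ) (hsymm : ∀ a b, c a b = c b a) (hpos : ∀ a b, a ≠ b → 0 < c a b)
    (huniq : ∀ s t : V, s ≠ t → ∃! S : Finset V,
      s ∈ S ∧ t ∉ S ∧ ∀ T : Finset V, s ∈ T → t ∉ T → cutValR c S ≤ cutValR c T)
    (p : V) :
    ∀ u v : V, u ≠ p → v ≠ p →
      ∀ Su Sv : Finset V,
        (u ∈ Su ∧ p ∉ Su ∧ ∀ T : Finset V, u ∈ T → p ∉ T → cutValR c Su ≤ cutValR c T) →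
        (v ∈ Sv ∧ p ∉ Sv ∧ ∀ T : Finset V, v ∈ T → p ∉ T → cutValR c Sv ≤ cutValR c T) →
        Disjoint Su Sv ∨ Su ⊆ Sv ∨ Sv ⊆ Su := by
  have hnn : ∀ a b, a ≠ b → 0 ≤ c a b := fun a b h => (hpos a b h).le
  intro u v hup hvp Su Sv hSu hSv
  obtain ⟨hu, hpu, hminU⟩ := hSu
  obtain ⟨hv, hpv, hminV⟩ := hSv
  have keyU : ∀ T : Finset V, u ∈ T → p ∉ T →
      (∀ T' : Finset V, u ∈ T' → p ∉ T' → cutValR c T ≤ cutValR c T') → T = Su := by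
    intro T h1 h2 h3
    obtain ⟨S, _, hS⟩ := huniq u p hup
    rw [hS T ⟨h1, h2, h3⟩, hS Su ⟨hu, hpu, hminU⟩]
  have keyV : ∀ T : Finset V, v ∈ T → p ∉ T →
      (∀ T' : Finset V, v ∈ T' → p ∉ T' → cutValR c T ≤ cutValR c T') → T = Sv := by
    intro T h1 h2 h3
    obtain ⟨S, _, hS⟩ := huniq v p hvp
    rw [hS T ⟨h1, h2, h3⟩, hS Sv ⟨hv, hpv, hminV⟩]
  have hpui : p ∉ Su ∩ Sv := fun h => hpu (Finset.mem_inter.1 h).1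
  have hpuu : p ∉ Su ∪ Sv := by simp [hpu, hpv]
  by_cases huv : u ∈ Sv
  · -- u ∈ Su ∩ Sv, v ∈ Su ∪ Sv : Su ⊆ Sv
    have h1 : cutValR c Su ≤ cutValR c (Su ∩ Sv) :=
      hminU _ (Finset.mem_inter.2 ⟨hu, huv⟩) hpui
    have h2 : cutValR c Sv ≤ cutValR c (Su ∪ Sv) :=
      hminV _ (Finset.mem_union_right _ hv) hpuu
    have h3 := submod c hnn Su Sv
    have heq : cutValR c (Su ∩ Sv) = cutValR c Su := by linarith
    have hset : Su ∩ Sv = Su := by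
      refine keyU _ (Finset.mem_inter.2 ⟨hu, huv⟩) hpui fun T' h1' h2' => ?_
      rw [heq]; exact hminU T' h1' h2'
    exact Or.inr (Or.inl (Finset.inter_eq_left.1 hset))
  · by_cases hvu : v ∈ Su
    · -- v ∈ Su ∩ Sv, u ∈ Su ∪ Sv : Sv ⊆ Su
      have h1 : cutValR c Sv ≤ cutValR c (Su ∩ Sv) :=
        hminV _ (Finset.mem_inter.2 ⟨hvu, hv⟩) hpui
      have h2 : cutValR c Su ≤ cutValR c (Su ∪ Sv) :=
        hminU _ (Finset.mem_union_left _ hu) hpuu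
      have h3 := submod c hnn Su Sv
      have heq : cutValR c (Su ∩ Sv) = cutValR c Sv := by linarith
      have hset : Su ∩ Sv = Sv := by
        refine keyV _ (Finset.mem_inter.2 ⟨hvu, hv⟩) hpui fun T' h1' h2' => ?_
        rw [heq]; exact hminV T' h1' h2'
      exact Or.inr (Or.inr (Finset.inter_eq_right.1 hset))
    · -- u ∈ Su \ Sv, v ∈ Sv \ Su : disjoint
      have hpd1 : p ∉ Su \ Sv := fun h => hpu (Finset.mem_sdiff.1 h).1
      have hpd2 : p ∉ Sv \ Su := fun h => hpv (Finset.mem_sdiff.1 h).1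
      have h1 : cutValR c Su ≤ cutValR c (Su \ Sv) :=
        hminU _ (Finset.mem_sdiff.2 ⟨hu, huv⟩) hpd1
      have h2 : cutValR c Sv ≤ cutValR c (Sv \ Su) :=
        hminV _ (Finset.mem_sdiff.2 ⟨hv, hvu⟩) hpd2
      have h3 := posimod c hsymm hnn Su Sv
      have heq : cutValR c (Su \ Sv) = cutValR c Su := by linarith
      have hset : Su \ Sv = Su := by
        refine keyU _ (Finset.mem_sdiff.2 ⟨hu, huv⟩) hpd1 fun T' h1' h2' => ?_
        rw [heq]; exact hminU T' h1' h2'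
      exact Or.inl (Finset.sdiff_eq_self_iff_disjoint.1 hset)
end

section
/- For any two crossing minimum cuts from a common pivot there is an uncrossing: if S_u is a minimum (p,u)-cut and S_v is a minimum (p,v)-cut (u ∈ S_u, v ∈ S_v, p in neither), u ∉ S_v, v ∉ S_u, then S_u \ S_v is also a minimum (p,u)-cut and S_v \ S_u is also a minimum (p,v)-cut. -/
open Finset

lemma cutValR_eq {V : Type*} [Fintype V] [DecidableEq V] (c : V → V → ℝ) (S : Finset V) :
    cutValR c S = ∑ x : V, ∑ y : V, (if x ∈ S ∧ y ∉ S then (1:ℝ) else 0) * c x y := by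
  classical
  unfold cutValR
  rw [← Finset.sum_filter_add_sum_filter_not Finset.univ (· ∈ S)]
  have h1 : ∀ x ∈ Finset.univ.filter (· ∉ S), ∑ y : V, (if x ∈ S ∧ y ∉ S then (1:ℝ) else 0) * c x y = 0 := by
    intro x hx
    simp only [mem_filter] at hx
    apply Finset.sum_eq_zero
    intro y _
    simp [hx.2]
  rw [Finset.sum_eq_zero h1, add_zero]
  apply Finset.sum_congr
  · ext x; simp
  intro x hx
  simp only [mem_filter] at hx
  rw [← Finset.sum_filter_add_sum_filter_not Finset.univ (· ∉ S)]
  have h2 : ∑ y ∈ Finset.univ.filter (fun y => ¬ y ∉ S), (if x ∈ S ∧ y ∉ S then (1:ℝ) else 0) * c x y = 0 := by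
    apply Finset.sum_eq_zero; intro y hy
    simp only [mem_filter, not_not] at hy
    simp [hy.2]
  rw [h2, add_zero]
  apply Finset.sum_congr
  · ext y; simp
  intro y hy
  simp only [mem_filter] at hy
  simp [hx.2, hy.2]

lemma posimodular {V : Type*} [Fintype V] [DecidableEq V]
    (c : V → V → ℝ) (hsymm : ∀ a b, c a b = c b a) (hnn : ∀ a b, 0 ≤ c a b)
    (A B : Finset V) :
    cutValR c (A \ B) + cutValR c (B \ A) ≤ cutValR c A + cutValR c B := by
  classical
  simp only [cutValR_eq]
  set f : Finset V → V → V → ℝ := fun S x y => if x ∈ S ∧ y ∉ S then (1:ℝ) else 0 with hf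
  have key : ∀ x y : V,
      (f (A \ B) x y + f (A \ B) y x) + (f (B \ A) x y + f (B \ A) y x)
      ≤ (f A x y + f A y x) + (f B x y + f B y x) := by
    intro x y
    simp only [hf, Finset.mem_sdiff]
    by_cases hxA : x ∈ A <;> by_cases hxB : x ∈ B <;> by_cases hyA : y ∈ A <;> by_cases hyB : y ∈ B <;>
      simp [hxA, hxB, hyA, hyB]
  have expand : ∀ S : Finset V,
      (2:ℝ) * ∑ x : V, ∑ y : V, f S x y * c x y
        = ∑ x : V, ∑ y : V, (f S x y + f S y x) * c x y := by
    intro S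
    have : ∑ x : V, ∑ y : V, f S y x * c x y = ∑ x : V, ∑ y : V, f S x y * c x y := by
      rw [Finset.sum_comm]
      simp_rw [fun x y => hsymm x y]
    simp_rw [add_mul, Finset.sum_add_distrib, this]
    ring
  have main : (2:ℝ) * (∑ x : V, ∑ y : V, f (A \ B) x y * c x y + ∑ x : V, ∑ y : V, f (B \ A) x y * c x y)
      ≤ (2:ℝ) * (∑ x : V, ∑ y : V, f A x y * c x y + ∑ x : V, ∑ y : V, f B x y * c x y) := by
    rw [mul_add, mul_add, expand, expand, expand, expand]
    rw [← Finset.sum_add_distrib, ← Finset.sum_add_distrib]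
    apply Finset.sum_le_sum
    intro x _
    rw [← Finset.sum_add_distrib, ← Finset.sum_add_distrib]
    apply Finset.sum_le_sum
    intro y _
    rw [← add_mul, ← add_mul]
    exact mul_le_mul_of_nonneg_right (key x y) (hnn x y)
  linarith

/-- Uncrossing of two crossing minimum cuts from a common pivot `p`: if `S_u` is a minimum
`(p,u)`-cut and `S_v` a minimum `(p,v)`-cut with `u ∉ S_v` and `v ∉ S_u`, then `S_u \ S_v` is
also a minimum `(p,u)`-cut and `S_v \ S_u` is also a minimum `(p,v)`-cut. -/
theorem stmt_17 {V : Type*} [Fintype V] [DecidableEq V]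
    (c : V → V → ℝ) (hsymm : ∀ a b, c a b = c b a) (hnn : ∀ a b, 0 ≤ c a b)
    (p u v : V) (Su Sv : Finset V)
    (hu : u ∈ Su) (hpu : p ∉ Su)
    (hv : v ∈ Sv) (hpv : p ∉ Sv)
    (huv : u ∉ Sv) (hvu : v ∉ Su)
    (hminu : ∀ T : Finset V, u ∈ T → p ∉ T → cutValR c Su ≤ cutValR c T)
    (hminv : ∀ T : Finset V, v ∈ T → p ∉ T → cutValR c Sv ≤ cutValR c T) :
    (cutValR c (Su \ Sv) = cutValR c Su ∧
      ∀ T : Finset V, u ∈ T → p ∉ T → cutValR c (Su \ Sv) ≤ cutValR c T) ∧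
    (cutValR c (Sv \ Su) = cutValR c Sv ∧
      ∀ T : Finset V, v ∈ T → p ∉ T → cutValR c (Sv \ Su) ≤ cutValR c T) := by
  have huSd : u ∈ Su \ Sv := Finset.mem_sdiff.mpr ⟨hu, huv⟩
  have hpSd : p ∉ Su \ Sv := fun h => hpu (Finset.mem_sdiff.mp h).1
  have hvSd : v ∈ Sv \ Su := Finset.mem_sdiff.mpr ⟨hv, hvu⟩
  have hpSd' : p ∉ Sv \ Su := fun h => hpv (Finset.mem_sdiff.mp h).1
  have h1 := hminu (Su \ Sv) huSd hpSd
  have h2 := hminv (Sv \ Su) hvSd hpSd'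
  have h3 := posimodular c hsymm hnn Su Sv
  have e1 : cutValR c (Su \ Sv) = cutValR c Su := by linarith
  have e2 : cutValR c (Sv \ Su) = cutValR c Sv := by linarith
  exact ⟨⟨e1, fun T hT hpT => e1 ▸ hminu T hT hpT⟩, ⟨e2, fun T hT hpT => e2 ▸ hminv T hT hpT⟩⟩
end

section
/- Let T be a Gomory-Hu tree of a graph G and fix p ∈ V(G). Define ℓ(u) for u ≠ p as the lowest minimum-weight edge on the tree path from u to p (ties broken toward u). Then for each edge e of T, the set ℓ⁻¹(e) induces a connected subgraph of T, so contracting each class ℓ⁻¹(e) yields a tree (the cut-membership tree of G with respect to p). -/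
open SimpleGraph

private lemma list_key {α : Type*} (wt : α → ℝ) (f g : α) :
    ∀ (l₁ l₂ m₁ m₂ : List α), l₁ ++ f :: l₂ = m₁ ++ g :: m₂ →
    (∀ e ∈ l₁, wt f < wt e) → (∀ e ∈ l₂, wt f ≤ wt e) →
    (∀ e ∈ m₁, wt g < wt e) → (∀ e ∈ m₂, wt g ≤ wt e) → f = g := by
  intro l₁
  induction l₁ with
  | nil =>
    intro l₂ m₁ m₂ h hf1 hf2 hg1 hg2
    cases m₁ with
    | nil =>
      simp only [List.nil_append, List.cons.injEq] at h
      exact h.1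
    | cons b m₁' =>
      simp only [List.nil_append, List.cons_append, List.cons.injEq] at h
      obtain ⟨hfb, hl⟩ := h
      exfalso
      have h1 : wt f ≤ wt g := hf2 g (by rw [hl]; simp)
      have h2 : wt g < wt f := hg1 f (by rw [hfb]; simp)
      linarith
  | cons a l₁' ih =>
    intro l₂ m₁ m₂ h hf1 hf2 hg1 hg2
    cases m₁ with
    | nil =>
      simp only [List.nil_append, List.cons_append, List.cons.injEq] at h
      obtain ⟨hag, hl⟩ := h
      exfalso
      have h1 : wt g ≤ wt f := hg2 f (by rw [← hl]; simp)
      have h2 : wt f < wt g := hag ▸ hf1 a (by simp)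
      linarith
    | cons b m₁' =>
      simp only [List.cons_append, List.cons.injEq] at h
      exact ih l₂ m₁' m₂ h.2 (fun e he => hf1 e (by simp [he])) hf2
        (fun e he => hg1 e (by simp [he])) hg2

/-- Let `T` be a tree with edge weights `wt` and a distinguished vertex `p`.  Suppose the map
`ℓ` sends each `u ≠ p` to the lowest minimum-weight edge on the path from `u` to `p` (i.e., on
the walk from `u` to `p`, all edges strictly before `ℓ u` have strictly larger weight and all
edges have weight at least `wt (ℓ u)`).  Then every fiber `ℓ⁻¹(e)` induces a connected
subgraph of `T` (so contracting the fibers yields the cut-membership tree). -/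
theorem stmt_19 {V : Type*} [Fintype V] [DecidableEq V]
    (T : SimpleGraph V) (hT : T.IsTree) (wt : Sym2 V → ℝ)
    (p : V) (ℓ : V → Sym2 V)
    (hℓ : ∀ u : V, u ≠ p → ∀ q : T.Walk u p, q.IsPath →
      ∃ l₁ l₂ : List (Sym2 V), q.edges = l₁ ++ ℓ u :: l₂ ∧
        (∀ e ∈ l₁, wt (ℓ u) < wt e) ∧ (∀ e ∈ l₂, wt (ℓ u) ≤ wt e)) :
    ∀ e : Sym2 V, {u : V | u ≠ p ∧ ℓ u = e}.Nonempty →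
      (T.induce {u : V | u ≠ p ∧ ℓ u = e}).Connected := by
  intro e hs
  set s : Set V := {u : V | u ≠ p ∧ ℓ u = e} with hsdef
  -- a vertex beginning a nonempty path to `p` is not `p`
  have hne : ∀ (u v : V) (h : T.Adj u v) (r : T.Walk v p),
      (SimpleGraph.Walk.cons h r).IsPath → u ≠ p := by
    intro u v h r hp
    rintro rfl
    rw [SimpleGraph.Walk.cons_isPath_iff] at hp
    exact hp.2 r.end_mem_support
  -- uniqueness of the labelled edge
  have hℓeq : ∀ (u : V), u ≠ p → ∀ (q : T.Walk u p), q.IsPath →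
      ∀ l₁ l₂ : List (Sym2 V), q.edges = l₁ ++ e :: l₂ →
      (∀ f ∈ l₁, wt e < wt f) → (∀ f ∈ l₂, wt e ≤ wt f) → ℓ u = e := by
    intro u hup q hq l₁ l₂ hdec h1 h2
    obtain ⟨m₁, m₂, hm, hm1, hm2⟩ := hℓ u hup q hq
    exact list_key wt (ℓ u) e m₁ m₂ l₁ l₂ (hm.symm.trans hdec) hm1 hm2 h1 h2
  -- two vertices whose paths to `p` start with edge `e` are equal
  have firstedge : ∀ (x u : V) (qx : T.Walk x p) (qu : T.Walk u p),
      qx.IsPath → qu.IsPath → ∀ lx lu, qx.edges = e :: lx → qu.edges = e :: lu →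
      u = x := by
    intro x u qx qu hqx hqu lx lu hex heu
    cases qx with
    | nil => simp at hex
    | @cons _ y _ hadj r =>
      cases qu with
      | nil => simp at heu
      | @cons _ v _ hadj' r' =>
        simp only [SimpleGraph.Walk.edges_cons, List.cons.injEq] at hex heu
        have hsym : s(x, y) = s(u, v) := hex.1.trans heu.1.symm
        rw [Sym2.eq_iff] at hsym
        rcases hsym with ⟨h1, h2⟩ | ⟨h1, h2⟩
        · exact h1.symm
        · exfalso
          subst h1 h2
          -- now r : T.Walk u p ; by uniqueness r = cons hadj' r'
          have hr : r = SimpleGraph.Walk.cons hadj' r' :=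
            (hT.existsUnique_path _ p).unique
              ((SimpleGraph.Walk.cons_isPath_iff _ _).mp hqx).1 hqu
          rw [SimpleGraph.Walk.cons_isPath_iff] at hqx
          apply hqx.2
          rw [hr]
          simp only [SimpleGraph.Walk.support_cons, List.mem_cons]
          exact Or.inr r'.start_mem_support
  -- main induction: every fiber member reaches a vertex whose path starts with `e`
  have main : ∀ (l₁ : List (Sym2 V)) (u : V) (q : T.Walk u p), q.IsPath →
      ∀ l₂ : List (Sym2 V), q.edges = l₁ ++ e :: l₂ →
      (∀ f ∈ l₁, wt e < wt f) → (∀ f ∈ l₂, wt e ≤ wt f) →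
      ∃ (hu : u ∈ s) (x : V) (hx : x ∈ s) (qx : T.Walk x p) (lx : List (Sym2 V)),
        qx.IsPath ∧ qx.edges = e :: lx ∧
        (T.induce s).Reachable ⟨u, hu⟩ ⟨x, hx⟩ := by
    intro l₁
    induction l₁ with
    | nil =>
      intro u q hq l₂ hdec h1 h2
      rw [List.nil_append] at hdec
      have hup : u ≠ p := by
        cases q with
        | nil => simp at hdec
        | cons h r => exact hne _ _ h r hq
      have hu : u ∈ s := ⟨hup, hℓeq u hup q hq [] l₂ (by simpa using hdec) (by simp) h2⟩
      exact ⟨hu, u, hu, q, l₂, hq, hdec, SimpleGraph.Reachable.refl _⟩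
    | cons f l₁' ih =>
      intro u q hq l₂ hdec h1 h2
      cases q with
      | nil => simp at hdec
      | @cons _ v _ hadj r =>
        rw [SimpleGraph.Walk.edges_cons, List.cons_append] at hdec
        injection hdec with hf hr
        have hrp : r.IsPath := ((SimpleGraph.Walk.cons_isPath_iff _ _).mp hq).1
        have hup : u ≠ p := hne _ _ hadj r hq
        have hu : u ∈ s := ⟨hup, hℓeq u hup (SimpleGraph.Walk.cons hadj r) hq (f :: l₁') l₂
          (by rw [SimpleGraph.Walk.edges_cons, hf, hr, List.cons_append]) h1 h2⟩
        obtain ⟨hv, x, hx, qx, lx, hqx, hex, hreach⟩ :=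
          ih v r hrp l₂ hr (fun g hg => h1 g (by simp [hg])) h2
        refine ⟨hu, x, hx, qx, lx, hqx, hex, ?_⟩
        have hadj' : (T.induce s).Adj ⟨u, hu⟩ ⟨v, hv⟩ := hadj
        exact hadj'.reachable.trans hreach
  rw [SimpleGraph.connected_iff]
  constructor
  · rintro ⟨a, ha⟩ ⟨b, hb⟩
    obtain ⟨qa, hqa, -⟩ := hT.existsUnique_path a p
    obtain ⟨qb, hqb, -⟩ := hT.existsUnique_path b p
    obtain ⟨la₁, la₂, hda, ha1, ha2⟩ := hℓ a ha.1 qa hqa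
    rw [ha.2] at hda ha1 ha2
    obtain ⟨lb₁, lb₂, hdb, hb1, hb2⟩ := hℓ b hb.1 qb hqb
    rw [hb.2] at hdb hb1 hb2
    obtain ⟨hua, xa, hxa, qxa, lxa, hqxa, hexa, hra⟩ := main la₁ a qa hqa la₂ hda ha1 ha2
    obtain ⟨hub, xb, hxb, qxb, lxb, hqxb, hexb, hrb⟩ := main lb₁ b qb hqb lb₂ hdb hb1 hb2
    have hxx : xb = xa := firstedge xa xb qxa qxb hqxa hqxb lxa lxb hexa hexb
    subst hxx
    exact hra.trans hrb.symm
  · obtain ⟨u₀, hu₀⟩ := hs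
    exact ⟨⟨u₀, hu₀⟩⟩
end
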